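/- arXiv:0907.5180 — 2 statements merged into one kernel-verified Lean document; each statement's English description precedes it below -/
import Mathlib

section
/- Let W: ℝ → ℝ be nonnegative, satisfying W(x) = (1/c) ∫_{-∞}^∞ W(y) R(x−y) dy for all x ≥ 0 with c = φ(λ)/λ, and suppose for some λ̃ ∈ (λ, λ*) that A = sup_{x ≥ 0} e^{λ̃x} W(x) is finite and positive, where φ(λ̃)/λ̃ < φ(λ)/λ and ∫ e^{λ̃ z} R(z) dz = φ(λ̃)/λ̃. Then one derives A ≤ (φ(λ̃)/λ̃)(λ/φ(λ)) A < A, a contradiction; hence sup_{x ≥ 0} e^{λ̃x} W(x) = ∞ whenever it is positive. -/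
open MeasureTheory Real Set

/-! If `A = sup_{x ≥ 0} e^{λ̃x} W(x)` were finite, then `W(y) ≤ A e^{-λ̃y}` inside the convolution
gives `e^{λ̃x} W(x) ≤ (A/c) ∫_{z ≤ x} e^{λ̃z} R(z) dz ≤ A (φ(λ̃)/λ̃)/c < A`, contradicting the
choice of `A`.

This needs `z ↦ e^{λ̃z} R(z)` to be integrable (otherwise its Bochner integral is the junk value
`0`). If it is not, `R` does not vanish beyond any point, and the argument is rerun with the
weight `λ`: `B = sup_{x ≥ 0} e^{λx} W(x) ≤ A` is finite, beyond a point `T` the factor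
`e^{-(λ̃-λ)x}` pushes `e^{λx} W(x)` below `B/2`, and up to `T` it is at most
`(B/c) ∫_{z ≤ T} e^{λz} R(z) dz < B` since the mass of `e^{λz} R(z)` beyond `T` is positive. -/

open Filter Topology

theorem antitone_setIntegral_Ioi {ρ : ℝ → ℝ} (hρ : ∀ x, 0 ≤ ρ x) (hρ_int : Integrable ρ) :
    Antitone fun x => ∫ y in Ioi x, ρ y := fun _ _ hab =>
  setIntegral_mono_set hρ_int.integrableOn (ae_of_all _ hρ) (Ioi_subset_Ioi hab).eventuallyLE

theorem not_bddAbove_image_of_forall_upperBound_lt {f : ℝ → ℝ} {s : Set ℝ}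
    (hpos : ∃ x ∈ s, 0 < f x)
    (h : ∀ M, 0 < M → (∀ x ∈ s, f x ≤ M) → ∃ M' < M, ∀ x ∈ s, f x ≤ M') :
    ¬ BddAbove (f '' s) := by
  intro hbdd
  obtain ⟨x₀, hx₀, hfx₀⟩ := hpos
  have hlub := isLUB_csSup ⟨_, mem_image_of_mem f hx₀⟩ hbdd
  have hle : ∀ x ∈ s, f x ≤ sSup (f '' s) := fun x hx => hlub.1 (mem_image_of_mem f hx)
  obtain ⟨M', hM'lt, hM'⟩ := h _ (hfx₀.trans_le (hle x₀ hx₀)) hle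
  exact hM'lt.not_ge (hlub.2 (forall_mem_image.2 hM'))

theorem integral_mul_sub_le_of_le_exp_neg {R W : ℝ → ℝ} {m C x : ℝ} (hR : ∀ z, 0 ≤ R z)
    (hW_zero : ∀ y < 0, W y = 0) (hWC : ∀ y ≥ 0, W y ≤ C * exp (-(m * y)))
    (hg : Integrable fun z => exp (m * z) * R z) (hconv : Integrable fun y => W y * R (x - y)) :
    ∫ y, W y * R (x - y) ≤ C * exp (-(m * x)) * ∫ z in Iic x, exp (m * z) * R z := by
  set g : ℝ → ℝ := (Iic x).indicator fun z => exp (m * z) * R z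
  have hpointwise : ∀ y, W y * R (x - y) ≤ C * exp (-(m * x)) * g (x - y) := by
    intro y
    rcases lt_or_ge y 0 with hy | hy
    · simp [g, hW_zero y hy, hy]
    · have hxy : x - y ∈ Iic x := by simp [hy]
      calc W y * R (x - y) ≤ C * exp (-(m * y)) * R (x - y) :=
            mul_le_mul_of_nonneg_right (hWC y hy) (hR _)
        _ = C * exp (-(m * x)) * g (x - y) := by
            rw [show g (x - y) = _ from indicator_of_mem hxy _,
              show -(m * y) = -(m * x) + m * (x - y) by ring, exp_add]
            ring
  calc ∫ y, W y * R (x - y) ≤ ∫ y, C * exp (-(m * x)) * g (x - y) :=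
        integral_mono hconv (((hg.indicator measurableSet_Iic).comp_sub_left x).const_mul _)
          hpointwise
    _ = C * exp (-(m * x)) * ∫ z in Iic x, exp (m * z) * R z := by
        rw [integral_const_mul, integral_sub_left_eq_self g volume x,
          integral_indicator measurableSet_Iic]

theorem setIntegral_Ioi_exp_mul_pos_of_not_integrable {R : ℝ → ℝ} {m m' : ℝ} (hmm' : m ≤ m')
    (hR : ∀ z, 0 ≤ R z) (hR_anti : Antitone R) (hg : Integrable fun z => exp (m * z) * R z)
    (hg' : ¬ Integrable fun z => exp (m' * z) * R z) (T : ℝ) :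
    0 < ∫ z in Ioi T, exp (m * z) * R z := by
  obtain ⟨z₀, hTz₀, hRz₀⟩ : ∃ z₀ > T, 0 < R z₀ := by
    by_contra! hzero
    refine hg' ((hg.const_mul (exp ((m' - m) * T))).mono'
      ((measurable_const.mul measurable_id).exp.mul hR_anti.measurable).aestronglyMeasurable
      (ae_of_all _ fun z => ?_))
    rw [norm_of_nonneg (mul_nonneg (exp_pos _).le (hR z))]
    rcases le_or_gt z T with hz | hz
    · calc exp (m' * z) * R z = exp ((m' - m) * z) * (exp (m * z) * R z) := by
            rw [← mul_assoc, ← exp_add]; ring_nf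
        _ ≤ exp ((m' - m) * T) * (exp (m * z) * R z) := by
            gcongr
            exact mul_nonneg (exp_pos _).le (hR z)
    · simp [le_antisymm (hzero z hz) (hR z)]
  rw [setIntegral_pos_iff_support_of_nonneg_ae
    (ae_of_all _ fun z => mul_nonneg (exp_pos _).le (hR z)) hg.integrableOn]
  calc 0 < volume (Ioo T z₀) := by simpa using hTz₀
    _ ≤ _ := by
      refine measure_mono fun z hz => ⟨?_, hz.1⟩
      exact (mul_pos (exp_pos _) (hRz₀.trans_le (hR_anti hz.2.le))).ne'

section Renewal

variable {R W : ℝ → ℝ} {c : ℝ} (hc : 0 < c) (hR : ∀ z, 0 ≤ R z) (hW_zero : ∀ y < 0, W y = 0)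
  (hW_conv : ∀ x, Integrable fun y => W y * R (x - y))
  (hW_eq : ∀ x ≥ 0, W x = 1 / c * ∫ y, W y * R (x - y))
include hc hR hW_zero hW_conv hW_eq

theorem exp_mul_le_of_renewal {m M x : ℝ} (hWM : ∀ y ≥ 0, exp (m * y) * W y ≤ M)
    (hg : Integrable fun z => exp (m * z) * R z) (hx : 0 ≤ x) :
    exp (m * x) * W x ≤ M / c * ∫ z in Iic x, exp (m * z) * R z := by
  have hWM' : ∀ y ≥ 0, W y ≤ M * exp (-(m * y)) := fun y hy => by
    rw [exp_neg, ← div_eq_mul_inv, le_div_iff₀ (exp_pos _), mul_comm]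
    exact hWM y hy
  calc exp (m * x) * W x = exp (m * x) * (1 / c * ∫ y, W y * R (x - y)) := by rw [← hW_eq x hx]
    _ ≤ exp (m * x) * (1 / c * (M * exp (-(m * x)) * ∫ z in Iic x, exp (m * z) * R z)) := by
        gcongr
        exact integral_mul_sub_le_of_le_exp_neg hR hW_zero hWM' hg (hW_conv x)
    _ = M / c * ∫ z in Iic x, exp (m * z) * R z := by
        rw [exp_neg]
        field_simp

theorem not_bddAbove_exp_mul_of_integral_lt {m : ℝ} (hpos : ∃ x ≥ 0, 0 < W x)
    (hg : Integrable fun z => exp (m * z) * R z) (hlt : ∫ z, exp (m * z) * R z < c) :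
    ¬ BddAbove ((fun x => exp (m * x) * W x) '' Ici 0) := by
  obtain ⟨x₀, hx₀, hWx₀⟩ := hpos
  refine not_bddAbove_image_of_forall_upperBound_lt (f := fun x => exp (m * x) * W x)
    ⟨x₀, hx₀, by positivity⟩ fun M hM hWM => ⟨M / c * ∫ z, exp (m * z) * R z, ?_, fun x hx => ?_⟩
  · rw [div_mul_eq_mul_div, mul_div_assoc]
    exact mul_lt_of_lt_one_right hM ((div_lt_one hc).2 hlt)
  · exact (exp_mul_le_of_renewal hc hR hW_zero hW_conv hW_eq hWM hg hx).trans <|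
      mul_le_mul_of_nonneg_left
        (setIntegral_le_integral hg (ae_of_all _ fun z => mul_nonneg (exp_pos _).le (hR z)))
        (by positivity)

theorem not_bddAbove_exp_mul_of_setIntegral_Ioi_pos {m m' : ℝ} (hmm' : m < m')
    (hW_nonneg : ∀ x, 0 ≤ W x) (hpos : ∃ x ≥ 0, 0 < W x)
    (hg : Integrable fun z => exp (m * z) * R z) (hg_eq : ∫ z, exp (m * z) * R z = c)
    (htail : ∀ T, 0 < ∫ z in Ioi T, exp (m * z) * R z) :
    ¬ BddAbove ((fun x => exp (m' * x) * W x) '' Ici 0) := by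
  rintro ⟨A, hA⟩
  have hWA : ∀ x ≥ 0, exp (m * x) * W x ≤ A * exp (-((m' - m) * x)) := fun x hx => by
    rw [show m * x = -((m' - m) * x) + m' * x by ring, exp_add, mul_assoc, mul_comm A]
    gcongr
    exact hA (mem_image_of_mem _ hx)
  obtain ⟨x₀, hx₀, hWx₀⟩ := hpos
  refine not_bddAbove_image_of_forall_upperBound_lt (f := fun x => exp (m * x) * W x)
    ⟨x₀, hx₀, by positivity⟩ (fun M hM hWM => ?_)
    ⟨A, forall_mem_image.2 fun x hx => le_trans ?_ (hA (mem_image_of_mem _ hx))⟩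
  · have hdecay : Tendsto (fun x => A * exp (-((m' - m) * x))) atTop (𝓝 0) := by
      simpa using (tendsto_exp_neg_atTop_nhds_zero.comp
        (tendsto_id.const_mul_atTop (sub_pos.2 hmm'))).const_mul A
    obtain ⟨T, hT⟩ := eventually_atTop.1 (hdecay.eventually (ge_mem_nhds (half_pos hM)))
    have hlt : ∫ z in Iic T, exp (m * z) * R z < c := by
      rw [← hg_eq, ← integral_add_compl measurableSet_Iic hg, compl_Iic]
      linarith [htail T]
    refine ⟨max (M / c * ∫ z in Iic T, exp (m * z) * R z) (M / 2), max_lt ?_ (by linarith),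
      fun x hx => ?_⟩
    · rw [div_mul_eq_mul_div, mul_div_assoc]
      exact mul_lt_of_lt_one_right hM ((div_lt_one hc).2 hlt)
    rcases le_total x T with hxT | hTx
    · refine le_max_of_le_left <|
        (exp_mul_le_of_renewal hc hR hW_zero hW_conv hW_eq hWM hg hx).trans ?_
      exact mul_le_mul_of_nonneg_left (setIntegral_mono_set hg.integrableOn
        (ae_of_all _ fun z => mul_nonneg (exp_pos _).le (hR z)) (Iic_subset_Iic.2 hxT).eventuallyLE)
        (by positivity)
    · exact le_max_of_le_right ((hWA x hx).trans (hT x hTx))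
  · exact mul_le_mul_of_nonneg_right (exp_le_exp.2 (mul_le_mul_of_nonneg_right hmm'.le hx))
      (hW_nonneg x)

end Renewal

theorem stmt10_general (ρ : ℝ → ℝ) (hρ_nonneg : ∀ x, 0 ≤ ρ x) (hρ_int : Integrable ρ)
    (R : ℝ → ℝ) (hR : ∀ x, R x = ∫ y in Ioi x, ρ y)
    (lam lamt : ℝ) (hlam : 0 < lam) (hlt : lam < lamt)
    (φlam φlamt : ℝ)
    (hφpos : 0 < φlam)
    (hRlam : ∫ z, Real.exp (lam * z) * R z = φlam / lam)
    (hRlamt : ∫ z, Real.exp (lamt * z) * R z = φlamt / lamt)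
    (hstrict : φlamt / lamt < φlam / lam)
    (c : ℝ) (hc : c = φlam / lam)
    (W : ℝ → ℝ) (hW_nonneg : ∀ x, 0 ≤ W x)
    (hW_zero : ∀ x < (0 : ℝ), W x = 0)
    (hW_conv : ∀ x, Integrable (fun y => W y * R (x - y)))
    (hW_eq : ∀ x ≥ (0 : ℝ), W x = (1 / c) * ∫ y, W y * R (x - y))
    (hpos : ∃ x ≥ (0 : ℝ), 0 < W x) :
    ¬ BddAbove ((fun x => Real.exp (lamt * x) * W x) '' Ici 0) := by
  have hR_nonneg : ∀ z, 0 ≤ R z := fun z =>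
    hR z ▸ setIntegral_nonneg measurableSet_Ioi fun y _ => hρ_nonneg y
  have hR_anti : Antitone R := by
    simpa only [← funext hR] using antitone_setIntegral_Ioi hρ_nonneg hρ_int
  have hc_pos : 0 < c := hc ▸ div_pos hφpos hlam
  have hg : Integrable fun z => exp (lam * z) * R z := by
    by_contra h
    rw [integral_undef h, ← hc] at hRlam
    exact hc_pos.ne hRlam
  by_cases hg' : Integrable fun z => exp (lamt * z) * R z
  · exact not_bddAbove_exp_mul_of_integral_lt hc_pos hR_nonneg hW_zero hW_conv hW_eq hpos hg'
      (hRlamt ▸ hc ▸ hstrict)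
  · exact not_bddAbove_exp_mul_of_setIntegral_Ioi_pos hc_pos hR_nonneg hW_zero hW_conv hW_eq hlt
      hW_nonneg hpos hg (hRlam.trans hc.symm)
      (setIntegral_Ioi_exp_mul_pos_of_not_integrable hlt.le hR_nonneg hR_anti hg hg')

/-- If W ≥ 0 satisfies W(x) = (1/c) ∫ W(y) R(x−y) dy for x ≥ 0 with
c = φ(λ)/λ, and λ̃ ∈ (λ, λ*) satisfies φ(λ̃)/λ̃ < φ(λ)/λ and
∫ e^{λ̃z} R(z) dz = φ(λ̃)/λ̃, then sup_{x ≥ 0} e^{λ̃x} W(x) cannot be finite and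
positive; hence it is infinite whenever it is positive. -/
theorem stmt10 (ρ : ℝ → ℝ) (hρ_nonneg : ∀ x, 0 ≤ ρ x) (hρ_int : Integrable ρ)
    (hρ_mass : ∫ x, ρ x = 1)
    (R : ℝ → ℝ) (hR : ∀ x, R x = ∫ y in Ioi x, ρ y)
    (lam lamt : ℝ) (hlam : 0 < lam) (hlt : lam < lamt)
    (φlam φlamt : ℝ)
    (hφlam : φlam = ∫ x, Real.exp (lam * x) * ρ x)
    (hφlamt : φlamt = ∫ x, Real.exp (lamt * x) * ρ x)
    (hφpos : 0 < φlam)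
    (hRlam : ∫ z, Real.exp (lam * z) * R z = φlam / lam)
    (hRlamt : ∫ z, Real.exp (lamt * z) * R z = φlamt / lamt)
    (hstrict : φlamt / lamt < φlam / lam)
    (c : ℝ) (hc : c = φlam / lam)
    (W : ℝ → ℝ) (hW_meas : Measurable W) (hW_nonneg : ∀ x, 0 ≤ W x)
    (hW_zero : ∀ x < (0 : ℝ), W x = 0)
    (hW_conv : ∀ x, Integrable (fun y => W y * R (x - y)))
    (hW_eq : ∀ x ≥ (0 : ℝ), W x = (1 / c) * ∫ y, W y * R (x - y))
    (hpos : ∃ x ≥ (0 : ℝ), 0 < W x) :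
    ¬ BddAbove ((fun x => Real.exp (lamt * x) * W x) '' Ici 0) :=
  stmt10_general ρ hρ_nonneg hρ_int R hR lam lamt hlam hlt φlam φlamt hφpos hRlam hRlamt hstrict c
    hc W hW_nonneg hW_zero hW_conv hW_eq hpos
end

section
/- Let F, G: [0,T] × ℝ → ℝ satisfy, for a fixed x ∈ ℝ and all t ∈ [0,T], ∂/∂t (F − G)(t,x') = ∫_{-∞}^∞ (F(t,y) − G(t,y)) ρ(x'−y) dy for all x' in some set containing x, with F(0,y) ≥ G(0,y) for all y and ρ ≥ 0. If F − G satisfies this linear integro-differential equation for all x' ∈ ℝ and all t ∈ [0,T], then F(t,y) ≥ G(t,y) for all t ∈ [0,T] and y ∈ ℝ. -/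
open MeasureTheory Real Set

/-!
Write `H = F - G` and `M = ∫ ρ`. Since `ρ ≥ 0`, a lower bound `H ≥ -b` at time `s` propagates
through the equation as `∂ₜH(s, ·) ≥ -b M`. Starting from the bound `H ≥ -B` and integrating in
time repeatedly from `H(0, ·) ≥ 0` gives `H(t, ·) ≥ -B (M t)ⁿ / n!` for every `n`, and the right
side tends to `0`.
-/

theorem hasDerivAt_pow_succ_div_factorial (n : ℕ) (s : ℝ) :
    HasDerivAt (fun s : ℝ => s ^ (n + 1) / (n + 1).factorial) (s ^ n / n.factorial) s := by
  refine ((hasDerivAt_pow (n + 1) s).div_const _).congr_deriv ?_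
  rw [Nat.factorial_succ, Nat.add_sub_cancel]
  push_cast
  field_simp

theorem le_mul_pow_succ_div_factorial_of_deriv_le {u u' : ℝ → ℝ} {a t : ℝ} {n : ℕ}
    (h0 : u 0 ≤ 0) (hu : ∀ s ∈ Icc 0 t, HasDerivAt u (u' s) s)
    (hu' : ∀ s ∈ Ico 0 t, u' s ≤ a * (s ^ n / n.factorial)) (ht : 0 ≤ t) :
    u t ≤ a * (t ^ (n + 1) / (n + 1).factorial) := by
  have hbound : ∀ s, HasDerivAt (fun s : ℝ => a * (s ^ (n + 1) / (n + 1).factorial))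
      (a * (s ^ n / n.factorial)) s := fun s =>
    (hasDerivAt_pow_succ_div_factorial n s).const_mul a
  refine image_le_of_deriv_right_le_deriv_boundary
    (fun s hs => (hu s hs).continuousAt.continuousWithinAt)
    (fun s hs => (hu s (Ico_subset_Icc_self hs)).hasDerivWithinAt) (by simpa using h0)
    (fun s _ => (hbound s).continuousAt.continuousWithinAt)
    (fun s _ => (hbound s).hasDerivWithinAt) hu' ⟨ht, le_rfl⟩

theorem neg_integral_mul_comp_sub_le {ρ h : ℝ → ℝ} {b : ℝ} (hρ_nonneg : ∀ x, 0 ≤ ρ x)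
    (hρ_int : Integrable ρ) (x : ℝ) (hint : Integrable fun y => h y * ρ (x - y))
    (hb : ∀ y, -h y ≤ b) :
    -∫ y, h y * ρ (x - y) ≤ b * ∫ y, ρ y := by
  have hρx : Integrable fun y => ρ (x - y) := by simpa using hρ_int.comp_sub_left x
  rw [← integral_neg, ← integral_sub_left_eq_self ρ volume x, ← integral_const_mul]
  refine integral_mono hint.neg (hρx.const_mul b) fun y => ?_
  simpa [neg_mul] using mul_le_mul_of_nonneg_right (hb y) (hρ_nonneg (x - y))

section ConvolutionEvolution

variable {ρ : ℝ → ℝ} {H : ℝ → ℝ → ℝ} {T : ℝ}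

theorem neg_le_mul_pow_div_factorial_of_hasDerivAt_integral_mul {B : ℝ}
    (hρ_nonneg : ∀ x, 0 ≤ ρ x) (hρ_int : Integrable ρ)
    (hint : ∀ t ∈ Icc 0 T, ∀ x, Integrable fun y => H t y * ρ (x - y))
    (hderiv : ∀ x, ∀ t ∈ Icc 0 T, HasDerivAt (fun s => H s x) (∫ y, H t y * ρ (x - y)) t)
    (hinit : ∀ y, 0 ≤ H 0 y) (hB : ∀ t ∈ Icc 0 T, ∀ x, -H t x ≤ B) (n : ℕ) :
    ∀ t ∈ Icc 0 T, ∀ x, -H t x ≤ B * ((∫ y, ρ y) * t) ^ n / n.factorial := by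
  set M := ∫ y, ρ y
  induction n with
  | zero => simpa using hB
  | succ n ih =>
    intro t ht x
    have hsub : Icc 0 t ⊆ Icc 0 T := Icc_subset_Icc_right ht.2
    have hstep : -H t x ≤ B * M ^ (n + 1) * (t ^ (n + 1) / (n + 1).factorial) := by
      refine le_mul_pow_succ_div_factorial_of_deriv_le (u := fun s => -H s x)
        (by simpa using hinit x) (fun s hs => (hderiv x s (hsub hs)).neg) (fun s hs => ?_) ht.1
      have hs : s ∈ Icc 0 T := hsub (Ico_subset_Icc_self hs)
      calc -∫ y, H s y * ρ (x - y)
          ≤ B * (M * s) ^ n / n.factorial * M :=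
            neg_integral_mul_comp_sub_le hρ_nonneg hρ_int x (hint s hs x) (ih s hs)
        _ = B * M ^ (n + 1) * (s ^ n / n.factorial) := by ring
    exact hstep.trans_eq (by ring)

theorem nonneg_of_hasDerivAt_integral_mul
    (hρ_nonneg : ∀ x, 0 ≤ ρ x) (hρ_int : Integrable ρ)
    (hint : ∀ t ∈ Icc 0 T, ∀ x, Integrable fun y => H t y * ρ (x - y))
    (hderiv : ∀ x, ∀ t ∈ Icc 0 T, HasDerivAt (fun s => H s x) (∫ y, H t y * ρ (x - y)) t)
    (hinit : ∀ y, 0 ≤ H 0 y) (hbdd : ∃ B, ∀ t ∈ Icc 0 T, ∀ x, -H t x ≤ B) :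
    ∀ t ∈ Icc 0 T, ∀ x, 0 ≤ H t x := by
  obtain ⟨B, hB⟩ := hbdd
  intro t ht x
  have hlim : Filter.Tendsto (fun n : ℕ => B * ((∫ y, ρ y) * t) ^ n / n.factorial)
      Filter.atTop (nhds 0) := by
    simpa [mul_div_assoc] using
      (FloorSemiring.tendsto_pow_div_factorial_atTop ((∫ y, ρ y) * t)).const_mul B
  exact neg_nonpos.mp <| ge_of_tendsto' hlim fun n =>
    neg_le_mul_pow_div_factorial_of_hasDerivAt_integral_mul hρ_nonneg hρ_int hint hderiv
      hinit hB n t ht x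

end ConvolutionEvolution

theorem stmt13_general (ρ : ℝ → ℝ) (hρ_nonneg : ∀ x, 0 ≤ ρ x) (hρ_int : Integrable ρ)
    (T : ℝ) (F G : ℝ → ℝ → ℝ)
    (hbdd : ∃ B : ℝ, ∀ t ∈ Icc (0 : ℝ) T, ∀ x, |F t x - G t x| ≤ B)
    (hint : ∀ t ∈ Icc (0 : ℝ) T, ∀ x : ℝ,
      Integrable (fun y => (F t y - G t y) * ρ (x - y)))
    (hderiv : ∀ x : ℝ, ∀ t ∈ Icc (0 : ℝ) T,
      HasDerivAt (fun s => F s x - G s x)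
        (∫ y, (F t y - G t y) * ρ (x - y)) t)
    (hinit : ∀ y, G 0 y ≤ F 0 y) :
    ∀ t ∈ Icc (0 : ℝ) T, ∀ y, G t y ≤ F t y := by
  obtain ⟨B, hB⟩ := hbdd
  intro t ht y
  refine sub_nonneg.mp <| nonneg_of_hasDerivAt_integral_mul (H := fun t x => F t x - G t x)
    hρ_nonneg hρ_int hint hderiv (fun y => sub_nonneg.mpr (hinit y)) ?_ t ht y
  exact ⟨B, fun t ht x => (neg_le_abs _).trans (hB t ht x)⟩

/-- Comparison principle for the linear evolution ∂H/∂t = H * ρ: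
if H = F − G is bounded, satisfies ∂H/∂t(t,x) = ∫ H(t,y) ρ(x−y) dy for all x ∈ ℝ and
t ∈ [0,T], and H(0,·) ≥ 0, then F(t,y) ≥ G(t,y) for all t ∈ [0,T], y ∈ ℝ. -/
theorem stmt13 (ρ : ℝ → ℝ) (hρ_nonneg : ∀ x, 0 ≤ ρ x) (hρ_int : Integrable ρ)
    (hρ_mass : ∫ x, ρ x = 1)
    (T : ℝ) (hT : 0 < T) (F G : ℝ → ℝ → ℝ)
    (hmeas : Measurable fun p : ℝ × ℝ => F p.1 p.2 - G p.1 p.2)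
    (hbdd : ∃ B : ℝ, ∀ t ∈ Icc (0 : ℝ) T, ∀ x, |F t x - G t x| ≤ B)
    (hint : ∀ t ∈ Icc (0 : ℝ) T, ∀ x : ℝ,
      Integrable (fun y => (F t y - G t y) * ρ (x - y)))
    (hderiv : ∀ x : ℝ, ∀ t ∈ Icc (0 : ℝ) T,
      HasDerivAt (fun s => F s x - G s x)
        (∫ y, (F t y - G t y) * ρ (x - y)) t)
    (hinit : ∀ y, G 0 y ≤ F 0 y) :
    ∀ t ∈ Icc (0 : ℝ) T, ∀ y, G t y ≤ F t y :=
  stmt13_general ρ hρ_nonneg hρ_int T F G hbdd hint hderiv hinit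
end
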